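/- Let K be a field with a non-archimedean valuation v with value group Γ, M = ℤⁿ, and let Δ be a pointed Γ-rational polyhedron in ℝⁿ. Then the ideal {f ∈ K[M]^Δ : v_Δ(f) > 0}, where v_Δ(f) = min over vertices ω of Δ of v_ω(f), has minimal primary decomposition given by the prime ideals I_ω = {f ∈ K[M]^Δ : v_ω(f) > 0}, ω ranging over the vertices of Δ. In particular, each I_ω is a prime ideal of K[M]^Δ. -/

import Mathlib

open scoped BigOperators

/-- The `ω`-weight `v_ω(f) = min_{u ∈ supp f} (v(f_u) + ⟨u, ω⟩)` of a Laurent polynomial. -/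
noncomputable def omegaWeight {K : Type*} [Field K] {n : ℕ} (v : K → WithTop ℝ)
    (ω : Fin n → ℝ) (f : AddMonoidAlgebra K (Fin n → ℤ)) : WithTop ℝ :=
  (Finsupp.support f.coeff).inf fun u =>
    v (f.coeff u) + (((∑ i, (u i : ℝ) * ω i) : ℝ) : WithTop ℝ)

/-- A `Γ`-rational polyhedron in `ℝⁿ`, where `Γ` is the value group of `v`: a finite
intersection of halfspaces `{ω : ⟨u,ω⟩ + c ≥ 0}` with `u ∈ ℤⁿ` and `c ∈ Γ`. -/
def IsGRatPolyhedron {K : Type*} [Field K] {n : ℕ} (v : K → WithTop ℝ)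
    (Δ : Set (Fin n → ℝ)) : Prop :=
  ∃ (N : ℕ) (u : Fin N → (Fin n → ℤ)) (c : Fin N → ℝ),
    (∀ i, ∃ α : K, v α = (c i : WithTop ℝ)) ∧
    Δ = {ω | ∀ i, 0 ≤ (∑ j, (u i j : ℝ) * ω j) + c i}

/-- A set is pointed if it contains no affine line. -/
def IsPointedSet {n : ℕ} (Δ : Set (Fin n → ℝ)) : Prop :=
  ∀ p d : Fin n → ℝ, d ≠ 0 → ¬ ∀ t : ℝ, p + t • d ∈ Δ

/-- `K[M]^Δ` as a subset of the Laurent polynomial ring. -/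
def polApproxRing {K : Type*} [Field K] {n : ℕ} (v : K → WithTop ℝ)
    (Δ : Set (Fin n → ℝ)) : Set (AddMonoidAlgebra K (Fin n → ℤ)) :=
  {f | ∀ ω ∈ Δ, (0 : WithTop ℝ) ≤ omegaWeight v ω f}

/-- The ideal `I_ω = {f ∈ K[M]^Δ : v_ω(f) > 0}` of `K[M]^Δ`. -/
def vertexIdeal {K : Type*} [Field K] {n : ℕ} (v : K → WithTop ℝ)
    (Δ : Set (Fin n → ℝ)) (ω : Fin n → ℝ) : Set (AddMonoidAlgebra K (Fin n → ℤ)) :=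
  {f | f ∈ polApproxRing v Δ ∧ (0 : WithTop ℝ) < omegaWeight v ω f}


/-!
Gauss's lemma makes every `v_ω` multiplicative on Laurent polynomials: among the terms of
minimal `ω`-weight of `f` and of `g`, the lexicographically first ones multiply to a term of
`f g` that nothing else cancels. Hence `v_ω(f) ≥ 0` and `v_ω(g) ≥ 0` with `v_ω(f g) > 0` force
`v_ω(f) > 0` or `v_ω(g) > 0`, i.e. `I_ω` is prime.

For a vertex `ω₀`, write `Δ` as `{⟨u_i, ω⟩ + v(α_i) ≥ 0}` and multiply the monomials `α_i χ^{u_i}`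
over the inequalities active at `ω₀`. The product has `ω`-weight `∑ (⟨u_i, ω⟩ + v(α_i))`, which
is nonnegative on `Δ`, zero at `ω₀` and positive elsewhere, because `ω₀` is the only point of
`Δ` where all these inequalities are equalities. This element lies in every `I_ω` with
`ω ≠ ω₀` but not in `I_{ω₀}`, so no `I_{ω₀}` is redundant.
-/

open Filter Topology

theorem AddValuation.map_prod {R Γ₀ ι : Type*} [CommRing R] [LinearOrderedAddCommMonoidWithTop Γ₀]
    (v : AddValuation R Γ₀) (s : Finset ι) (f : ι → R) :
    v (∏ i ∈ s, f i) = ∑ i ∈ s, v (f i) := by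
  classical
  induction s using Finset.induction_on with
  | empty => simp
  | insert i s hi ih => rw [Finset.prod_insert hi, Finset.sum_insert hi, v.map_mul, ih]

theorem AddValuation.le_map_sum_add {R Γ₀ ι : Type*} [Ring R]
    [LinearOrderedAddCommMonoidWithTop Γ₀] (v : AddValuation R Γ₀) {s : Finset ι} {f : ι → R}
    {c : Γ₀} (r : Γ₀) (h : ∀ i ∈ s, c ≤ v (f i) + r) : c ≤ v (∑ i ∈ s, f i) + r := by
  rcases s.eq_empty_or_nonempty with rfl | hs
  · simp
  obtain ⟨i, hi, hmin⟩ := s.exists_mem_eq_inf hs fun i => v (f i)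
  exact (h i hi).trans (add_le_add_left (hmin ▸ v.map_le_sum fun j hj => Finset.inf_le hj) r)

theorem eq_of_mem_extremePoints_of_active {ι E : Type*} [Finite ι] [AddCommGroup E] [Module ℝ E]
    (φ : ι → E →ₗ[ℝ] ℝ) (c : ι → ℝ) {x₀ x : E}
    (hx₀ : x₀ ∈ {y | ∀ i, 0 ≤ φ i y + c i}.extremePoints ℝ) (hx : ∀ i, 0 ≤ φ i x + c i)
    (hact : ∀ i, φ i x₀ + c i = 0 → φ i x + c i = 0) : x = x₀ := by
  have hline : ∀ i (t : ℝ), φ i (x₀ + t • (x₀ - x)) + c i =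
      (φ i x₀ + c i) + t * ((φ i x₀ + c i) - (φ i x + c i)) := by
    intro i t
    simp only [map_add, map_smul, map_sub, smul_eq_mul]
    ring
  -- Moving from `x₀` away from `x` keeps the constraints active at `x₀` at zero and the others
  -- positive for a while; then `x₀` lies strictly between `x` and the new point.
  have hnear : ∀ᶠ t in 𝓝[>] (0 : ℝ), ∀ i, 0 ≤ φ i (x₀ + t • (x₀ - x)) + c i := by
    refine eventually_all.2 fun i => ?_
    simp only [hline]
    by_cases hi : φ i x₀ + c i = 0
    · exact Eventually.of_forall fun t => by simp [hi, hact i hi]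
    have hcont : Continuous fun t : ℝ =>
        (φ i x₀ + c i) + t * ((φ i x₀ + c i) - (φ i x + c i)) := by
      fun_prop
    have hpos : 0 < (φ i x₀ + c i) + 0 * ((φ i x₀ + c i) - (φ i x + c i)) := by
      simpa using (hx₀.1 i).lt_of_ne' hi
    exact ((hcont.tendsto 0).eventually (lt_mem_nhds hpos)).filter_mono nhdsWithin_le_nhds
      |>.mono fun _ => le_of_lt
  obtain ⟨t, hΔ, ht⟩ := (hnear.and self_mem_nhdsWithin).exists
  refine hx₀.2 hx hΔ ⟨t / (1 + t), 1 / (1 + t), by positivity, by positivity, ?_, ?_⟩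
  · field_simp; ring
  · have : 1 + t ≠ 0 := by positivity
    match_scalars <;> field_simp; ring

def pairing {n : ℕ} : (Fin n → ℤ) →+ (Fin n → ℝ) →ₗ[ℝ] ℝ :=
  (dotProductBilin ℝ ℝ).toAddMonoidHom.comp ((Int.castAddHom ℝ).compLeft (Fin n))

section OmegaWeight

variable {K : Type*} [Field K] {n : ℕ} (v : AddValuation K (WithTop ℝ)) (ω : Fin n → ℝ)

theorem omegaWeight_eq_inf (f : AddMonoidAlgebra K (Fin n → ℤ)) :
    omegaWeight v ω f = f.coeff.support.inf fun u => v (f.coeff u) + pairing u ω :=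
  rfl

theorem le_omegaWeight_iff {f : AddMonoidAlgebra K (Fin n → ℤ)} {c : WithTop ℝ} :
    c ≤ omegaWeight v ω f ↔ ∀ u, c ≤ v (f.coeff u) + pairing u ω := by
  rw [omegaWeight_eq_inf, Finset.le_inf_iff]
  refine ⟨fun h u => ?_, fun h u _ => h u⟩
  by_cases hu : u ∈ f.coeff.support
  · exact h u hu
  · simp [Finsupp.notMem_support_iff.1 hu]

theorem omegaWeight_le (f : AddMonoidAlgebra K (Fin n → ℤ)) (u : Fin n → ℤ) :
    omegaWeight v ω f ≤ v (f.coeff u) + pairing u ω :=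
  (le_omegaWeight_iff v ω).1 le_rfl u

@[simp]
theorem omegaWeight_zero : omegaWeight v ω (0 : AddMonoidAlgebra K (Fin n → ℤ)) = ⊤ := rfl

theorem omegaWeight_single (u : Fin n → ℤ) (α : K) :
    omegaWeight v ω (AddMonoidAlgebra.single u α) = v α + pairing u ω := by
  rcases eq_or_ne α 0 with rfl | hα
  · simp
  · rw [omegaWeight_eq_inf, AddMonoidAlgebra.coeff_single, Finsupp.support_single u hα,
      Finset.inf_singleton, Finsupp.single_eq_same]

theorem omegaWeight_one : omegaWeight v ω (1 : AddMonoidAlgebra K (Fin n → ℤ)) = 0 := by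
  simp [AddMonoidAlgebra.one_def, omegaWeight_single]

theorem exists_omegaWeight_eq {f : AddMonoidAlgebra K (Fin n → ℤ)} (hf : f ≠ 0) :
    ∃ u, f.coeff u ≠ 0 ∧ v (f.coeff u) + pairing u ω = omegaWeight v ω f := by
  obtain ⟨u, hu, hmin⟩ := Finset.exists_mem_eq_inf f.coeff.support
    (Finsupp.support_nonempty_iff.2 (AddMonoidAlgebra.coeff_eq_zero.not.2 hf))
    fun u => v (f.coeff u) + pairing u ω
  exact ⟨u, Finsupp.mem_support_iff.1 hu, hmin.symm⟩

theorem omegaWeight_ne_top {f : AddMonoidAlgebra K (Fin n → ℤ)} (hf : f ≠ 0) :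
    omegaWeight v ω f ≠ ⊤ := by
  obtain ⟨u, hu, hmin⟩ := exists_omegaWeight_eq v ω hf
  rw [← hmin]
  exact WithTop.add_ne_top.2 ⟨v.ne_top_iff.2 hu, WithTop.coe_ne_top⟩

theorem min_le_omegaWeight_add (f g : AddMonoidAlgebra K (Fin n → ℤ)) :
    min (omegaWeight v ω f) (omegaWeight v ω g) ≤ omegaWeight v ω (f + g) := by
  refine (le_omegaWeight_iff v ω).2 fun u => ?_
  calc min (omegaWeight v ω f) (omegaWeight v ω g)
      ≤ min (v (f.coeff u) + pairing u ω) (v (g.coeff u) + pairing u ω) :=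
        min_le_min (omegaWeight_le v ω f u) (omegaWeight_le v ω g u)
    _ = min (v (f.coeff u)) (v (g.coeff u)) + pairing u ω := min_add_add_right _ _ _
    _ ≤ v ((f + g).coeff u) + pairing u ω := add_le_add_left (v.map_add _ _) _

theorem add_le_omegaWeight_mul (f g : AddMonoidAlgebra K (Fin n → ℤ)) :
    omegaWeight v ω f + omegaWeight v ω g ≤ omegaWeight v ω (f * g) := by
  classical
  refine (le_omegaWeight_iff v ω).2 fun u => ?_
  rw [AddMonoidAlgebra.coeff_mul, Finsupp.sum]
  refine v.le_map_sum_add _ fun a _ => v.le_map_sum_add _ fun b _ => ?_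
  dsimp only
  split_ifs with hab
  · rw [v.map_mul, ← hab, map_add, LinearMap.add_apply, WithTop.coe_add, add_add_add_comm]
    exact add_le_add (omegaWeight_le v ω f a) (omegaWeight_le v ω g b)
  · simp

end OmegaWeight

section Gauss

variable {K : Type*} [Field K] {n : ℕ} (v : AddValuation K (WithTop ℝ)) (ω : Fin n → ℝ)

-- Ties among the terms of minimal weight are broken by an order of `ℤⁿ` compatible with addition.
def IsInitialExponent (f : AddMonoidAlgebra K (Fin n → ℤ)) (a₀ : Fin n → ℤ) : Prop :=
  v (f.coeff a₀) + pairing a₀ ω = omegaWeight v ω f ∧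
    ∀ a, v (f.coeff a) + pairing a ω = omegaWeight v ω f → toLex a₀ ≤ toLex a

variable {v ω}

theorem exists_isInitialExponent {f : AddMonoidAlgebra K (Fin n → ℤ)} (hf : f ≠ 0) :
    ∃ a₀, IsInitialExponent v ω f a₀ := by
  classical
  set S := f.coeff.support.filter fun a => v (f.coeff a) + pairing a ω = omegaWeight v ω f
  have hS : S.Nonempty := by
    obtain ⟨u, hu, hmin⟩ := exists_omegaWeight_eq v ω hf
    exact ⟨u, Finset.mem_filter.2 ⟨Finsupp.mem_support_iff.2 hu, hmin⟩⟩
  obtain ⟨a₀, ha₀, hlex⟩ := S.exists_min_image toLex hS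
  refine ⟨a₀, (Finset.mem_filter.1 ha₀).2, fun a ha => hlex a ?_⟩
  refine Finset.mem_filter.2 ⟨Finsupp.mem_support_iff.2 fun h0 => ?_, ha⟩
  rw [h0, v.map_zero, top_add] at ha
  exact omegaWeight_ne_top v ω hf ha.symm

theorem IsInitialExponent.coeff_ne_zero {f : AddMonoidAlgebra K (Fin n → ℤ)} {a₀ : Fin n → ℤ}
    (ha₀ : IsInitialExponent v ω f a₀) (hf : f ≠ 0) : f.coeff a₀ ≠ 0 := by
  intro h0
  have := ha₀.1
  rw [h0, v.map_zero, top_add] at this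
  exact omegaWeight_ne_top v ω hf this.symm

theorem IsInitialExponent.val_mul_lt {f g : AddMonoidAlgebra K (Fin n → ℤ)} {a₀ b₀ a b : Fin n → ℤ}
    (ha₀ : IsInitialExponent v ω f a₀) (hb₀ : IsInitialExponent v ω g b₀) (hf : f ≠ 0)
    (hg : g ≠ 0) (hab : a + b = a₀ + b₀) (hne : (a, b) ≠ (a₀, b₀)) :
    v (f.coeff a₀ * g.coeff b₀) < v (f.coeff a * g.coeff b) := by
  have hsum : omegaWeight v ω f + omegaWeight v ω g <
      v (f.coeff a) + pairing a ω + (v (g.coeff b) + pairing b ω) := by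
    have hA := omegaWeight_le v ω f a
    have hB := omegaWeight_le v ω g b
    rcases hA.lt_or_eq with hA | hA
    · exact WithTop.add_lt_add_of_lt_of_le (omegaWeight_ne_top v ω hg) hA hB
    rcases hB.lt_or_eq with hB | hB
    · exact WithTop.add_lt_add_of_le_of_lt (omegaWeight_ne_top v ω hf) hA.le hB
    have := (add_eq_add_iff_eq_and_eq (ha₀.2 a hA.symm) (hb₀.2 b hB.symm)).1
      (by rw [← toLex_add, ← toLex_add, hab])
    exact absurd (Prod.ext (toLex.injective this.1).symm (toLex.injective this.2).symm) hne
  have hpair : pairing a ω + pairing b ω = pairing a₀ ω + pairing b₀ ω := by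
    rw [← LinearMap.add_apply, ← map_add, hab, map_add, LinearMap.add_apply]
  rw [v.map_mul, v.map_mul]
  refine (WithTop.add_lt_add_iff_right
    (WithTop.coe_ne_top (a := pairing a₀ ω + pairing b₀ ω))).1 ?_
  calc v (f.coeff a₀) + v (g.coeff b₀) + ↑(pairing a₀ ω + pairing b₀ ω)
      = omegaWeight v ω f + omegaWeight v ω g := by
        rw [← ha₀.1, ← hb₀.1, WithTop.coe_add]; abel
    _ < v (f.coeff a) + pairing a ω + (v (g.coeff b) + pairing b ω) := hsum
    _ = v (f.coeff a) + v (g.coeff b) + ↑(pairing a₀ ω + pairing b₀ ω) := by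
        rw [← hpair, WithTop.coe_add]; abel

theorem omegaWeight_mul_le {f g : AddMonoidAlgebra K (Fin n → ℤ)} (hf : f ≠ 0) (hg : g ≠ 0) :
    omegaWeight v ω (f * g) ≤ omegaWeight v ω f + omegaWeight v ω g := by
  classical
  obtain ⟨a₀, ha₀⟩ := exists_isInitialExponent (v := v) (ω := ω) hf
  obtain ⟨b₀, hb₀⟩ := exists_isInitialExponent (v := v) (ω := ω) hg
  set P := (f.coeff.support ×ˢ g.coeff.support).erase (a₀, b₀)
  set F : (Fin n → ℤ) × (Fin n → ℤ) → K :=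
    fun p => if p.1 + p.2 = a₀ + b₀ then f.coeff p.1 * g.coeff p.2 else 0
  have hcoeff : (f * g).coeff (a₀ + b₀) = f.coeff a₀ * g.coeff b₀ + ∑ p ∈ P, F p := by
    rw [AddMonoidAlgebra.coeff_mul]
    simp only [Finsupp.sum]
    rw [← Finset.sum_product', ← Finset.add_sum_erase _ F (a := (a₀, b₀))
      (Finset.mem_product.2 ⟨Finsupp.mem_support_iff.2 (ha₀.coeff_ne_zero hf),
        Finsupp.mem_support_iff.2 (hb₀.coeff_ne_zero hg)⟩)]
    simp [F, P]
  have hne : v (f.coeff a₀ * g.coeff b₀) ≠ ⊤ :=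
    v.ne_top_iff.2 (mul_ne_zero (ha₀.coeff_ne_zero hf) (hb₀.coeff_ne_zero hg))
  have hlt : ∀ p ∈ P, v (f.coeff a₀ * g.coeff b₀) < v (F p) := by
    rintro ⟨a, b⟩ hp
    simp only [F]
    split_ifs with hab
    · exact ha₀.val_mul_lt hb₀ hf hg hab (Finset.mem_erase.1 hp).1
    · simpa using hne.lt_top
  calc omegaWeight v ω (f * g) ≤ v ((f * g).coeff (a₀ + b₀)) + pairing (a₀ + b₀) ω :=
        omegaWeight_le v ω _ _
    _ = v (f.coeff a₀) + pairing a₀ ω + (v (g.coeff b₀) + pairing b₀ ω) := by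
        rw [hcoeff, v.map_add_eq_of_lt_left (v.map_lt_sum hne hlt), v.map_mul, map_add,
          LinearMap.add_apply, WithTop.coe_add, add_add_add_comm]
    _ = omegaWeight v ω f + omegaWeight v ω g := by rw [ha₀.1, hb₀.1]

variable (v ω)

theorem omegaWeight_mul (f g : AddMonoidAlgebra K (Fin n → ℤ)) :
    omegaWeight v ω (f * g) = omegaWeight v ω f + omegaWeight v ω g := by
  rcases eq_or_ne f 0 with rfl | hf
  · simp
  rcases eq_or_ne g 0 with rfl | hg
  · simp
  exact (omegaWeight_mul_le hf hg).antisymm (add_le_omegaWeight_mul v ω f g)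

end Gauss

section VertexIdeal

variable {K : Type*} [Field K] {n : ℕ} {v : AddValuation K (WithTop ℝ)} {Δ : Set (Fin n → ℝ)}
  {ω : Fin n → ℝ} {f g : AddMonoidAlgebra K (Fin n → ℤ)}

theorem add_mem_polApproxRing (hf : f ∈ polApproxRing v Δ) (hg : g ∈ polApproxRing v Δ) :
    f + g ∈ polApproxRing v Δ := fun ω hω =>
  (le_min (hf ω hω) (hg ω hω)).trans (min_le_omegaWeight_add v ω f g)

theorem mul_mem_polApproxRing (hf : f ∈ polApproxRing v Δ) (hg : g ∈ polApproxRing v Δ) :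
    f * g ∈ polApproxRing v Δ := fun ω hω => by
  rw [omegaWeight_mul]
  exact add_nonneg (hf ω hω) (hg ω hω)

theorem add_mem_vertexIdeal (hf : f ∈ vertexIdeal v Δ ω) (hg : g ∈ vertexIdeal v Δ ω) :
    f + g ∈ vertexIdeal v Δ ω :=
  ⟨add_mem_polApproxRing hf.1 hg.1, (lt_min hf.2 hg.2).trans_le (min_le_omegaWeight_add v ω f g)⟩

theorem mul_mem_vertexIdeal (hω : ω ∈ Δ) (hf : f ∈ polApproxRing v Δ)
    (hg : g ∈ vertexIdeal v Δ ω) : f * g ∈ vertexIdeal v Δ ω := by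
  refine ⟨mul_mem_polApproxRing hf hg.1, ?_⟩
  rw [omegaWeight_mul]
  exact hg.2.trans_le (le_add_of_nonneg_left (hf ω hω))

theorem one_notMem_vertexIdeal : (1 : AddMonoidAlgebra K (Fin n → ℤ)) ∉ vertexIdeal v Δ ω :=
  fun h => (omegaWeight_one v ω ▸ h.2).false

theorem mem_or_mem_of_mul_mem_vertexIdeal (hω : ω ∈ Δ) (hf : f ∈ polApproxRing v Δ)
    (hg : g ∈ polApproxRing v Δ) (hfg : f * g ∈ vertexIdeal v Δ ω) :
    f ∈ vertexIdeal v Δ ω ∨ g ∈ vertexIdeal v Δ ω := by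
  rcases (hf ω hω).lt_or_eq with hpos | hzero
  · exact .inl ⟨hf, hpos⟩
  · have := hfg.2
    rw [omegaWeight_mul, ← hzero, zero_add] at this
    exact .inr ⟨hg, this⟩

end VertexIdeal

theorem exists_notMem_vertexIdeal_mem_vertexIdeal_of_ne {K : Type*} [Field K] {n : ℕ}
    (v : AddValuation K (WithTop ℝ)) {Δ : Set (Fin n → ℝ)} (hΔ : IsGRatPolyhedron v Δ)
    {ω₀ : Fin n → ℝ} (hω₀ : ω₀ ∈ Δ.extremePoints ℝ) :
    ∃ f ∈ polApproxRing v Δ, f ∉ vertexIdeal v Δ ω₀ ∧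
      ∀ ω ∈ Δ, ω ≠ ω₀ → f ∈ vertexIdeal v Δ ω := by
  classical
  obtain ⟨N, u, c, hc, hΔ⟩ := hΔ
  have hmem : ∀ ω ∈ Δ, ∀ i, 0 ≤ pairing (u i) ω + c i := fun ω hω => by rw [hΔ] at hω; exact hω
  rw [hΔ] at hω₀
  choose α hα using hc
  set A := Finset.univ.filter fun i => pairing (u i) ω₀ + c i = 0
  set f := AddMonoidAlgebra.single (∑ i ∈ A, u i) (∏ i ∈ A, α i)
  have hweight : ∀ ω, omegaWeight v ω f = ↑(∑ i ∈ A, (pairing (u i) ω + c i)) := by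
    intro ω
    rw [omegaWeight_single, v.map_prod, map_sum, LinearMap.sum_apply,
      Finset.sum_add_distrib, WithTop.coe_add, WithTop.coe_sum, WithTop.coe_sum, add_comm]
    simp only [hα]
  have hf : f ∈ polApproxRing v Δ := fun ω hω => by
    rw [hweight]
    exact_mod_cast Finset.sum_nonneg fun i _ => hmem ω hω i
  refine ⟨f, hf, fun h => ?_, fun ω hω hne => ⟨hf, ?_⟩⟩
  · have := h.2
    rw [hweight, Finset.sum_eq_zero fun i hi => (Finset.mem_filter.1 hi).2] at this
    exact this.false
  · rw [hweight]
    refine WithTop.coe_pos.2 ((Finset.sum_nonneg fun i _ => hmem ω hω i).lt_of_ne fun h => hne ?_)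
    refine eq_of_mem_extremePoints_of_active (fun i => pairing (u i)) c hω₀ (hmem ω hω)
      fun i hi => ?_
    exact (Finset.sum_eq_zero_iff_of_nonneg fun j _ => hmem ω hω j).1 h.symm i (by simp [A, hi])

theorem stmt6_general {K : Type*} [Field K] {n : ℕ}
    (v : K → WithTop ℝ)
    (hv0 : ∀ α : K, v α = ⊤ ↔ α = 0)
    (hvmul : ∀ α β : K, v (α * β) = v α + v β)
    (hvadd : ∀ α β : K, min (v α) (v β) ≤ v (α + β))
    (Δ : Set (Fin n → ℝ))
    (hΔrat : IsGRatPolyhedron v Δ) :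
    -- each I_ω is a prime ideal of K[M]^Δ
    (∀ ω ∈ Δ.extremePoints ℝ,
      (∀ f g, f ∈ vertexIdeal v Δ ω → g ∈ vertexIdeal v Δ ω → f + g ∈ vertexIdeal v Δ ω) ∧
      (∀ f g, f ∈ polApproxRing v Δ → g ∈ vertexIdeal v Δ ω → f * g ∈ vertexIdeal v Δ ω) ∧
      (1 : AddMonoidAlgebra K (Fin n → ℤ)) ∉ vertexIdeal v Δ ω ∧
      (∀ f g, f ∈ polApproxRing v Δ → g ∈ polApproxRing v Δ →
        f * g ∈ vertexIdeal v Δ ω → f ∈ vertexIdeal v Δ ω ∨ g ∈ vertexIdeal v Δ ω)) ∧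
    -- the decomposition: {f : v_Δ(f) > 0} is the intersection of the I_ω
    ({f | f ∈ polApproxRing v Δ ∧
        ∀ ω ∈ Δ.extremePoints ℝ, (0 : WithTop ℝ) < omegaWeight v ω f}
      = (⋂ ω ∈ Δ.extremePoints ℝ, vertexIdeal v Δ ω) ∩ polApproxRing v Δ) ∧
    -- minimality: no I_ω is redundant, and the primes are pairwise distinct
    (∀ ω₀ ∈ Δ.extremePoints ℝ,
      ¬ ((⋂ ω ∈ (Δ.extremePoints ℝ) \ {ω₀}, vertexIdeal v Δ ω) ∩ polApproxRing v Δ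
          ⊆ vertexIdeal v Δ ω₀)) ∧
    (∀ ω₁ ∈ Δ.extremePoints ℝ, ∀ ω₂ ∈ Δ.extremePoints ℝ, ω₁ ≠ ω₂ →
      vertexIdeal v Δ ω₁ ≠ vertexIdeal v Δ ω₂) := by
  have hv1 : v 1 = 0 := by
    have h := hvmul 1 1
    rw [mul_one] at h
    lift v 1 to ℝ using (hv0 1).not.2 one_ne_zero with r
    norm_cast at h ⊢
    linarith
  let w : AddValuation K (WithTop ℝ) := AddValuation.of v ((hv0 0).2 rfl) hv1 hvadd hvmul
  refine ⟨fun ω hω => ⟨fun f g => add_mem_vertexIdeal (v := w),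
    fun f g => mul_mem_vertexIdeal (v := w) hω.1, one_notMem_vertexIdeal (v := w),
    fun f g => mem_or_mem_of_mul_mem_vertexIdeal (v := w) hω.1⟩, ?_, ?_, ?_⟩
  · exact Set.ext fun f => ⟨fun ⟨hf, hpos⟩ => ⟨Set.mem_iInter₂.2 fun ω hω => ⟨hf, hpos ω hω⟩, hf⟩,
      fun ⟨h, hf⟩ => ⟨hf, fun ω hω => (Set.mem_iInter₂.1 h ω hω).2⟩⟩
  · intro ω₀ hω₀ hsub
    obtain ⟨f, hf, hf₀, hfω⟩ := exists_notMem_vertexIdeal_mem_vertexIdeal_of_ne w hΔrat hω₀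
    exact hf₀ (hsub ⟨Set.mem_iInter₂.2 fun ω hω => hfω ω hω.1.1 hω.2, hf⟩)
  · intro ω₁ hω₁ ω₂ hω₂ hne heq
    obtain ⟨f, hf, hf₂, hfω⟩ := exists_notMem_vertexIdeal_mem_vertexIdeal_of_ne w hΔrat hω₂
    exact hf₂ (heq ▸ hfω ω₁ hω₁.1 hne)

/-- For a pointed `Γ`-rational polyhedron `Δ` with vertex set the extreme points of `Δ`,
the ideal `{f ∈ K[M]^Δ : v_Δ(f) > 0}` (where `v_Δ(f) = min_{ω vertex} v_ω(f)`) has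
minimal primary decomposition given by the prime ideals
`I_ω = {f ∈ K[M]^Δ : v_ω(f) > 0}`, `ω` ranging over the vertices of `Δ`.
In particular each `I_ω` is a prime ideal of `K[M]^Δ`. -/
theorem stmt6 {K : Type*} [Field K] {n : ℕ}
    (v : K → WithTop ℝ)
    (hv0 : ∀ α : K, v α = ⊤ ↔ α = 0)
    (hvmul : ∀ α β : K, v (α * β) = v α + v β)
    (hvadd : ∀ α β : K, min (v α) (v β) ≤ v (α + β))
    (Δ : Set (Fin n → ℝ))
    (hΔrat : IsGRatPolyhedron v Δ)
    (hΔpt : IsPointedSet Δ)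
    (hΔne : Δ.Nonempty) :
    -- each I_ω is a prime ideal of K[M]^Δ
    (∀ ω ∈ Δ.extremePoints ℝ,
      (∀ f g, f ∈ vertexIdeal v Δ ω → g ∈ vertexIdeal v Δ ω → f + g ∈ vertexIdeal v Δ ω) ∧
      (∀ f g, f ∈ polApproxRing v Δ → g ∈ vertexIdeal v Δ ω → f * g ∈ vertexIdeal v Δ ω) ∧
      (1 : AddMonoidAlgebra K (Fin n → ℤ)) ∉ vertexIdeal v Δ ω ∧
      (∀ f g, f ∈ polApproxRing v Δ → g ∈ polApproxRing v Δ →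
        f * g ∈ vertexIdeal v Δ ω → f ∈ vertexIdeal v Δ ω ∨ g ∈ vertexIdeal v Δ ω)) ∧
    -- the decomposition: {f : v_Δ(f) > 0} is the intersection of the I_ω
    ({f | f ∈ polApproxRing v Δ ∧
        ∀ ω ∈ Δ.extremePoints ℝ, (0 : WithTop ℝ) < omegaWeight v ω f}
      = (⋂ ω ∈ Δ.extremePoints ℝ, vertexIdeal v Δ ω) ∩ polApproxRing v Δ) ∧
    -- minimality: no I_ω is redundant, and the primes are pairwise distinct
    (∀ ω₀ ∈ Δ.extremePoints ℝ,
      ¬ ((⋂ ω ∈ (Δ.extremePoints ℝ) \ {ω₀}, vertexIdeal v Δ ω) ∩ polApproxRing v Δ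
          ⊆ vertexIdeal v Δ ω₀)) ∧
    (∀ ω₁ ∈ Δ.extremePoints ℝ, ∀ ω₂ ∈ Δ.extremePoints ℝ, ω₁ ≠ ω₂ →
      vertexIdeal v Δ ω₁ ≠ vertexIdeal v Δ ω₂) :=
  stmt6_general v hv0 hvmul hvadd Δ hΔrat
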